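/- Let (π^i, P^i), i = 1, ..., n, be policy–transition pairs with each P^i in a coordinate-wise convex set P of transition models, and let λ_1, ..., λ_n ≥ 0 with sum 1. Then there exists a policy π and P ∈ P such that the state-action occupancy measure of (π, P) at every (h,s,a) equals sum_i λ_i * W^{π^i}(1_{h,s,a}, P^i). -/

import Mathlib

open Finset

noncomputable def trajProb (H : ℕ) {S A : Type} [Fintype S] [Fintype A] [DecidableEq S]
    (π : ℕ → S → A → ℝ) (p : ℕ → S → A → S → ℝ) (s0 : S)
    (s : Fin (H + 1) → S) (a : Fin H → A) : ℝ :=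
  (if s 0 = s0 then (1 : ℝ) else 0) *
    ∏ h : Fin H, (π h (s h.castSucc) (a h) * p h (s h.castSucc) (a h) (s h.succ))

noncomputable def W (H : ℕ) {S A : Type} [Fintype S] [Fintype A] [DecidableEq S]
    (π : ℕ → S → A → ℝ) (p : ℕ → S → A → S → ℝ) (s0 : S)
    (u : ℕ → S → A → ℝ) : ℝ :=
  ∑ s : Fin (H + 1) → S, ∑ a : Fin H → A,
    trajProb H π p s0 s a * ∑ h : Fin H, u h (s h.castSucc) (a h)

/-- Occupancy measure `W^π(1_{h,s,a}, p)`. -/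
noncomputable def occ (H : ℕ) {S A : Type} [Fintype S] [Fintype A] [DecidableEq S]
    [DecidableEq A] (π : ℕ → S → A → ℝ) (p : ℕ → S → A → S → ℝ) (s0 : S)
    (h0 : ℕ) (s1 : S) (a1 : A) : ℝ :=
  W H π p s0 (fun h s a => if h = h0 ∧ s = s1 ∧ a = a1 then 1 else 0)

/-!
Under a pair `(π, P)` the occupancy measure at `(h, s, a)` is `d_h(s) π_h(s, a)`, where the state
distribution `d_h` follows the forward recursion `d_{h+1}(s') = ∑ d_h(s) π_h(s, a) P_h(s, a, s')`.
Given the pairs `(πⁱ, Pⁱ)`, let `π_h(s)` be the average of the `πⁱ_h(s)` weighted by `λᵢ dⁱ_h(s)`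
and `P_h(s, a)` the average of the `Pⁱ_h(s, a)` weighted by `λᵢ dⁱ_h(s) πⁱ_h(s, a)`. The latter is a
convex combination, so it stays in the coordinate-wise convex set, and by induction on `h` the state
distribution of `(π, P)` is `∑ λᵢ dⁱ_h`; hence its occupancy measure is `∑ λᵢ dⁱ_h πⁱ_h`.
-/

theorem Fin.sum_univ_fun_snoc {α M : Type*} [Fintype α] [AddCommMonoid M] {n : ℕ}
    (f : (Fin (n + 1) → α) → M) :
    ∑ s, f s = ∑ s : Fin n → α, ∑ x, f (Fin.snoc s x) := by
  rw [← (Fin.snocEquiv fun _ => α).sum_comp, Fintype.sum_prod_type, sum_comm]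
  rfl

section Trajectories

variable {S A : Type} [Fintype S] [Fintype A] [DecidableEq S]

def stateDist (π : ℕ → S → A → ℝ) (p : ℕ → S → A → S → ℝ) (s0 : S) : ℕ → S → ℝ
  | 0 => fun s => if s = s0 then 1 else 0
  | h + 1 => fun s' => ∑ s, ∑ a, stateDist π p s0 h s * π h s a * p h s a s'

variable {π : ℕ → S → A → ℝ} {p : ℕ → S → A → S → ℝ} (s0 : S)

theorem stateDist_nonneg (hπ : ∀ h s a, 0 ≤ π h s a) (hp : ∀ h s a s', 0 ≤ p h s a s') :
    ∀ h s, 0 ≤ stateDist π p s0 h s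
  | 0, s => by unfold stateDist; positivity
  | h + 1, s' => sum_nonneg fun s _ => sum_nonneg fun a _ =>
      mul_nonneg (mul_nonneg (stateDist_nonneg hπ hp h s) (hπ h s a)) (hp h s a s')

theorem trajProb_snoc (H : ℕ) (s : Fin (H + 1) → S) (x : S) (a : Fin H → A) (y : A) :
    trajProb (H + 1) π p s0 (Fin.snoc s x) (Fin.snoc a y) =
      trajProb H π p s0 s a * (π H (s (Fin.last H)) y * p H (s (Fin.last H)) y x) := by
  have h0 : (Fin.snoc s x : Fin (H + 2) → S) 0 = s 0 := Fin.snoc_castSucc (i := 0) ..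
  simp only [trajProb, Fin.prod_univ_castSucc, h0, Fin.snoc_castSucc, Fin.succ_castSucc,
    Fin.val_castSucc, Fin.snoc_last, Fin.succ_last, Fin.val_last, mul_assoc]

theorem sum_trajProb_succ (H : ℕ) (g : (Fin (H + 2) → S) → (Fin (H + 1) → A) → ℝ) :
    ∑ s, ∑ a, trajProb (H + 1) π p s0 s a * g s a =
      ∑ s, ∑ a, trajProb H π p s0 s a * ∑ y, ∑ x,
        π H (s (Fin.last H)) y * p H (s (Fin.last H)) y x * g (Fin.snoc s x) (Fin.snoc a y) := by
  rw [Fin.sum_univ_fun_snoc]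
  simp only [Fin.sum_univ_fun_snoc (α := A), trajProb_snoc, mul_sum]
  refine sum_congr rfl fun s _ => ?_
  rw [sum_comm]
  refine sum_congr rfl fun a _ => ?_
  rw [sum_comm]
  simp only [mul_assoc]

theorem sum_trajProb_mul_last (H : ℕ) (f : S → ℝ) :
    ∑ s, ∑ a, trajProb H π p s0 s a * f (s (Fin.last H)) = ∑ x, stateDist π p s0 H x * f x := by
  induction H generalizing f with
  | zero =>
    rw [← (Equiv.funUnique (Fin 1) S).symm.sum_comp]
    simp [trajProb, stateDist]
  | succ H ih =>
    simp only [sum_trajProb_succ, Fin.snoc_last]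
    rw [ih fun z => ∑ y : A, ∑ x : S, π H z y * p H z y x * f x]
    simp only [stateDist, sum_mul, mul_sum]
    conv_rhs => rw [sum_comm]
    refine sum_congr rfl fun z _ => ?_
    conv_rhs => rw [sum_comm]
    simp only [mul_assoc]

theorem sum_trajProb_mul_init (hπ : ∀ h s, ∑ a, π h s a = 1) (hp : ∀ h s a, ∑ s', p h s a s' = 1)
    (H : ℕ) (g : (Fin (H + 1) → S) → (Fin H → A) → ℝ) :
    ∑ s, ∑ a, trajProb (H + 1) π p s0 s a * g (Fin.init s) (Fin.init a) =
      ∑ s, ∑ a, trajProb H π p s0 s a * g s a := by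
  have hmass (z : S) (c : ℝ) : ∑ y, ∑ x, π H z y * p H z y x * c = c := by
    simp only [← sum_mul, ← mul_sum, hp, mul_one, hπ, one_mul]
  simp only [sum_trajProb_succ, Fin.init_snoc, hmass]

theorem W_eq_sum_stateDist (hπ : ∀ h s, ∑ a, π h s a = 1) (hp : ∀ h s a, ∑ s', p h s a s' = 1)
    (H : ℕ) (u : ℕ → S → A → ℝ) :
    W H π p s0 u = ∑ h : Fin H, ∑ s, ∑ a, stateDist π p s0 h s * π h s a * u h s a := by
  induction H with
  | zero => simp [W]
  | succ H ih =>
    unfold W at ih ⊢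
    simp only [Fin.sum_univ_castSucc (n := H), mul_add, sum_add_distrib]
    congr 1
    · exact (sum_trajProb_mul_init s0 hπ hp H _).trans ih
    · have hlast (z : S) : ∑ y, ∑ x, π H z y * p H z y x * u H z y = ∑ y, π H z y * u H z y := by
        simp only [← sum_mul, ← mul_sum, hp, mul_one]
      simp only [sum_trajProb_succ, Fin.snoc_castSucc, Fin.snoc_last, Fin.val_last, hlast]
      exact (sum_trajProb_mul_last s0 H fun z => ∑ y, π H z y * u H z y).trans <| by
        simp only [mul_sum, mul_assoc]

end Trajectories

section CenterMassOr

variable {ι E : Type*} [Fintype ι] [AddCommGroup E] [Module ℝ E]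

noncomputable def centerMassOr (w : ι → ℝ) (z : ι → E) (d : E) : E :=
  if ∑ i, w i = 0 then d else univ.centerMass w z

theorem centerMassOr_mem {C : Set E} (hC : Convex ℝ C) {w : ι → ℝ} (hw : ∀ i, 0 ≤ w i)
    {z : ι → E} (hz : ∀ i, z i ∈ C) {d : E} (hd : d ∈ C) : centerMassOr w z d ∈ C := by
  unfold centerMassOr
  split_ifs with h
  · exact hd
  · exact hC.centerMass_mem (fun i _ => hw i)
      ((sum_nonneg fun i _ => hw i).lt_of_ne' h) (fun i _ => hz i)

theorem sum_smul_centerMassOr {w : ι → ℝ} (hw : ∀ i, 0 ≤ w i) (z : ι → E) (d : E) :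
    (∑ i, w i) • centerMassOr w z d = ∑ i, w i • z i := by
  unfold centerMassOr
  split_ifs with h
  · have hw0 := (sum_eq_zero_iff_of_nonneg fun i _ => hw i).1 h
    simp [hw0]
  · exact smul_inv_smul₀ h _

end CenterMassOr

section Mixture

variable {S A ι : Type} [Fintype S] [Fintype A] [DecidableEq S]

theorem stateDist_nonneg_of_mem_stdSimplex {πs : ι → ℕ → S → A → ℝ}
    {ps : ι → ℕ → S → A → S → ℝ} (s0 : S) (hπ : ∀ i h s, πs i h s ∈ stdSimplex ℝ A)
    (hp : ∀ i h s a, ps i h s a ∈ stdSimplex ℝ S) (i : ι) (h : ℕ) (s : S) :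
    0 ≤ stateDist (πs i) (ps i) s0 h s :=
  stateDist_nonneg s0 (fun h s a => (hπ i h s).1 a) (fun h s a => (hp i h s a).1) h s

variable [Fintype ι] (lam : ι → ℝ) (πs : ι → ℕ → S → A → ℝ) (ps : ι → ℕ → S → A → S → ℝ) (s0 : S)

-- Where all weights vanish, `(h, s)` is unreachable, so the fallback `λ`-mixture only has to lie
-- in the convex set.
noncomputable def mixPolicy (h : ℕ) (s : S) : A → ℝ :=
  centerMassOr (fun i => lam i * stateDist (πs i) (ps i) s0 h s) (fun i => πs i h s)
    (∑ i, lam i • πs i h s)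

noncomputable def mixModel (h : ℕ) (s : S) (a : A) : S → ℝ :=
  centerMassOr (fun i => lam i * (stateDist (πs i) (ps i) s0 h s * πs i h s a))
    (fun i => ps i h s a) (∑ i, lam i • ps i h s a)

variable {lam πs ps}

theorem mixPolicy_mem_stdSimplex (hlam0 : ∀ i, 0 ≤ lam i) (hlam1 : ∑ i, lam i = 1)
    (hπ : ∀ i h s, πs i h s ∈ stdSimplex ℝ A) (hp : ∀ i h s a, ps i h s a ∈ stdSimplex ℝ S)
    (h : ℕ) (s : S) : mixPolicy lam πs ps s0 h s ∈ stdSimplex ℝ A :=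
  centerMassOr_mem (convex_stdSimplex ℝ A)
    (fun i => mul_nonneg (hlam0 i) (stateDist_nonneg_of_mem_stdSimplex s0 hπ hp i h s))
    (fun i => hπ i h s)
    ((convex_stdSimplex ℝ A).sum_mem (fun i _ => hlam0 i) hlam1 fun i _ => hπ i h s)

theorem mixModel_mem {C : Set (S → ℝ)} (hC : Convex ℝ C) (hlam0 : ∀ i, 0 ≤ lam i)
    (hlam1 : ∑ i, lam i = 1) (hπ : ∀ i h s, πs i h s ∈ stdSimplex ℝ A)
    (hp : ∀ i h s a, ps i h s a ∈ stdSimplex ℝ S) {h : ℕ} {s : S} {a : A}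
    (hC_mem : ∀ i, ps i h s a ∈ C) : mixModel lam πs ps s0 h s a ∈ C :=
  centerMassOr_mem hC
    (fun i => mul_nonneg (hlam0 i)
      (mul_nonneg (stateDist_nonneg_of_mem_stdSimplex s0 hπ hp i h s) ((hπ i h s).1 a)))
    hC_mem (hC.sum_mem (fun i _ => hlam0 i) hlam1 fun i _ => hC_mem i)

theorem sum_mul_mixPolicy (hlam0 : ∀ i, 0 ≤ lam i) (hπ : ∀ i h s, πs i h s ∈ stdSimplex ℝ A)
    (hp : ∀ i h s a, ps i h s a ∈ stdSimplex ℝ S) (h : ℕ) (s : S) (a : A) :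
    (∑ i, lam i * stateDist (πs i) (ps i) s0 h s) * mixPolicy lam πs ps s0 h s a =
      ∑ i, lam i * (stateDist (πs i) (ps i) s0 h s * πs i h s a) := by
  have := congrFun (sum_smul_centerMassOr
    (fun i => mul_nonneg (hlam0 i) (stateDist_nonneg_of_mem_stdSimplex s0 hπ hp i h s))
    (fun i => πs i h s) (∑ i, lam i • πs i h s)) a
  simpa [mixPolicy, Finset.sum_apply, mul_assoc] using this

theorem sum_mul_mixModel (hlam0 : ∀ i, 0 ≤ lam i) (hπ : ∀ i h s, πs i h s ∈ stdSimplex ℝ A)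
    (hp : ∀ i h s a, ps i h s a ∈ stdSimplex ℝ S) (h : ℕ) (s : S) (a : A) (s' : S) :
    (∑ i, lam i * (stateDist (πs i) (ps i) s0 h s * πs i h s a)) * mixModel lam πs ps s0 h s a s' =
      ∑ i, lam i * (stateDist (πs i) (ps i) s0 h s * πs i h s a) * ps i h s a s' := by
  have := congrFun (sum_smul_centerMassOr
    (fun i => mul_nonneg (hlam0 i)
      (mul_nonneg (stateDist_nonneg_of_mem_stdSimplex s0 hπ hp i h s) ((hπ i h s).1 a)))
    (fun i => ps i h s a) (∑ i, lam i • ps i h s a)) s'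
  simpa [mixModel, Finset.sum_apply] using this

theorem stateDist_mixPolicy_mixModel (hlam0 : ∀ i, 0 ≤ lam i) (hlam1 : ∑ i, lam i = 1)
    (hπ : ∀ i h s, πs i h s ∈ stdSimplex ℝ A) (hp : ∀ i h s a, ps i h s a ∈ stdSimplex ℝ S) :
    ∀ h s, stateDist (mixPolicy lam πs ps s0) (mixModel lam πs ps s0) s0 h s =
      ∑ i, lam i * stateDist (πs i) (ps i) s0 h s
  | 0, s => by simp only [stateDist, ← sum_mul, hlam1, one_mul]
  | h + 1, s' => by
    simp only [stateDist, stateDist_mixPolicy_mixModel hlam0 hlam1 hπ hp h, sum_mul_mixPolicy s0 hlam0 hπ hp,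
      sum_mul_mixModel s0 hlam0 hπ hp, mul_sum]
    conv_lhs => enter [2, s]; rw [sum_comm]
    rw [sum_comm]
    simp only [mul_assoc]

theorem W_mixPolicy_mixModel (hlam0 : ∀ i, 0 ≤ lam i) (hlam1 : ∑ i, lam i = 1)
    (hπ : ∀ i h s, πs i h s ∈ stdSimplex ℝ A) (hp : ∀ i h s a, ps i h s a ∈ stdSimplex ℝ S)
    (H : ℕ) (u : ℕ → S → A → ℝ) :
    W H (mixPolicy lam πs ps s0) (mixModel lam πs ps s0) s0 u =
      ∑ i, lam i * W H (πs i) (ps i) s0 u := by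
  have hπmix h s := mixPolicy_mem_stdSimplex s0 hlam0 hlam1 hπ hp h s
  have hpmix h s a : mixModel lam πs ps s0 h s a ∈ stdSimplex ℝ S :=
    mixModel_mem s0 (convex_stdSimplex ℝ S) hlam0 hlam1 hπ hp (hp · h s a)
  rw [W_eq_sum_stateDist s0 (fun h s => (hπmix h s).2) (fun h s a => (hpmix h s a).2)]
  simp only [W_eq_sum_stateDist s0 (fun h s => (hπ _ h s).2) (fun h s a => (hp _ h s a).2),
    stateDist_mixPolicy_mixModel s0 hlam0 hlam1 hπ hp, sum_mul_mixPolicy s0 hlam0 hπ hp,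
    mul_sum, sum_mul]
  conv_lhs => enter [2, h, 2, s]; rw [sum_comm]
  conv_lhs => enter [2, h]; rw [sum_comm]
  rw [sum_comm]
  simp only [mul_assoc]

end Mixture

/-- **Occupancy-mixture lemma (n-fold).** Any convex combination of occupancy measures
of policy–transition pairs `(πⁱ, Pⁱ)` with each `Pⁱ` in a coordinate-wise convex set of
transition models is the occupancy measure of a single policy under a single transition
model in that set. -/
theorem stmt7 {S A : Type} [Fintype S] [Fintype A] [DecidableEq S] [DecidableEq A]
    (H n : ℕ) (Pconf : ℕ → S → A → Set (S → ℝ))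
    (hconv : ∀ h s a, Convex ℝ (Pconf h s a))
    (hsimplex : ∀ h s a, ∀ q ∈ Pconf h s a, (∀ s', 0 ≤ q s') ∧ ∑ s', q s' = 1)
    (πi : Fin n → ℕ → S → A → ℝ) (Pi : Fin n → ℕ → S → A → S → ℝ) (s0 : S)
    (hπi : ∀ i h s, (∀ a, 0 ≤ πi i h s a) ∧ ∑ a, πi i h s a = 1)
    (hPi : ∀ i h s a, Pi i h s a ∈ Pconf h s a)
    (lam : Fin n → ℝ) (hlam0 : ∀ i, 0 ≤ lam i) (hlam1 : ∑ i, lam i = 1) :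
    ∃ (π : ℕ → S → A → ℝ) (P : ℕ → S → A → S → ℝ),
      (∀ h s, (∀ a, 0 ≤ π h s a) ∧ ∑ a, π h s a = 1) ∧
      (∀ h s a, P h s a ∈ Pconf h s a) ∧
      ∀ h s a, occ H π P s0 h s a = ∑ i, lam i * occ H (πi i) (Pi i) s0 h s a := by
  have hPi_simplex i h s a : Pi i h s a ∈ stdSimplex ℝ S := hsimplex h s a _ (hPi i h s a)
  exact ⟨mixPolicy lam πi Pi s0, mixModel lam πi Pi s0,
    mixPolicy_mem_stdSimplex s0 hlam0 hlam1 hπi hPi_simplex,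
    fun h s a => mixModel_mem s0 (hconv h s a) hlam0 hlam1 hπi hPi_simplex (hPi · h s a),
    fun h s a => W_mixPolicy_mixModel s0 hlam0 hlam1 hπi hPi_simplex H _⟩
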